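/- arXiv:1101.0239 — 2 statements merged into one kernel-verified Lean document; each statement's English description precedes it below -/
import Mathlib

section
/- Let P and Q be probability measures on (Ω, 𝒜) with P ≪ Q and dP/dQ essentially bounded, X : Ω → ℝ integrable with respect to both P and Q, and φ a real-valued concave function on an interval containing the range of X, with φ(X) integrable with respect to both P and Q. Then φ(∫ X dP) − ∫ φ(X) dP ≤ ‖dP/dQ‖_∞ · ( φ(∫ X dQ) − ∫ φ(X) dQ ). -/
/-!
Let `μ = ∫ X dQ`. If `X` is `Q`-a.e. constant then, since `P ≪ Q`, it is also `P`-a.e. constant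
and both Jensen gaps vanish. Otherwise `μ` lies in the interior of `s`, so `φ` has a supporting
line `ℓ(y) = φ μ + c (y - μ)` there. The function `g = ℓ ∘ X - φ ∘ X` is nonnegative, so
`∫ g dP = ∫ (dP/dQ) g dQ ≤ ‖dP/dQ‖_∞ ∫ g dQ`. Finally `∫ g dQ` is exactly the `Q`-gap, while
`∫ g dP` dominates the `P`-gap because `φ (∫ X dP) ≤ ℓ (∫ X dP)`.
-/

open MeasureTheory Set

lemma ConvexOn.add_rightDeriv_mul_sub_le {s : Set ℝ} {f : ℝ → ℝ} (hf : ConvexOn ℝ s f)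
    {x y : ℝ} (hx : x ∈ interior s) (hy : y ∈ s) :
    f x + derivWithin f (Ioi x) x * (y - x) ≤ f y := by
  rcases lt_trichotomy y x with hyx | rfl | hxy
  · have hslope : slope f y x ≤ derivWithin f (Ioi x) x :=
      (hf.slope_le_leftDeriv_of_mem_interior hy hx hyx).trans
        (hf.leftDeriv_le_rightDeriv_of_mem_interior hx)
    rw [slope_def_field, div_le_iff₀ (sub_pos.mpr hyx)] at hslope
    nlinarith
  · simp
  · have hslope : derivWithin f (Ioi x) x ≤ slope f x y :=
      hf.rightDeriv_le_slope_of_mem_interior hx hy hxy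
    rw [slope_def_field, le_div_iff₀ (sub_pos.mpr hxy)] at hslope
    linarith

lemma ConcaveOn.exists_le_add_mul_sub {s : Set ℝ} {f : ℝ → ℝ} (hf : ConcaveOn ℝ s f)
    {x : ℝ} (hx : x ∈ interior s) : ∃ c, ∀ y ∈ s, f y ≤ f x + c * (y - x) := by
  refine ⟨-derivWithin (-f) (Ioi x) x, fun y hy => ?_⟩
  have := hf.neg.add_rightDeriv_mul_sub_le hx hy
  simp only [Pi.neg_apply] at this
  linarith

lemma Set.OrdConnected.mem_interior_of_lt_of_lt {s : Set ℝ} (hs : s.OrdConnected)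
    {a x b : ℝ} (ha : a ∈ s) (hb : b ∈ s) (hax : a < x) (hxb : x < b) : x ∈ interior s := by
  have : Icc a b ⊆ s := hs.out ha hb
  exact interior_mono this (by rw [interior_Icc]; exact ⟨hax, hxb⟩)

namespace MeasureTheory

variable {Ω : Type*} [MeasurableSpace Ω]

lemma _root_.Set.OrdConnected.integral_mem {s : Set ℝ} (hs : s.OrdConnected)
    {μ : Measure Ω} [IsProbabilityMeasure μ] {f : Ω → ℝ} (hf : Integrable f μ)
    (hfs : ∀ ω, f ω ∈ s) :
    ∫ ω, f ω ∂μ ∈ s := by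
  obtain ⟨a, ha⟩ := exists_le_integral hf
  obtain ⟨b, hb⟩ := exists_integral_le hf
  exact hs.out (hfs a) (hfs b) ⟨ha, hb⟩

lemma ae_eq_integral_or_exists_lt_integral_lt {μ : Measure Ω} [IsProbabilityMeasure μ]
    {f : Ω → ℝ} (hf : Integrable f μ) :
    f =ᵐ[μ] (fun _ => ∫ ω, f ω ∂μ) ∨ ∃ a b, f a < ∫ ω, f ω ∂μ ∧ ∫ ω, f ω ∂μ < f b := by
  by_contra! h
  obtain ⟨hne, hgap⟩ := h
  have hconst : Integrable (fun _ => ∫ ω, f ω ∂μ) μ := integrable_const _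
  have hint : ∫ ω, f ω ∂μ = ∫ _, (∫ ω, f ω ∂μ) ∂μ := by simp
  by_cases hbelow : ∃ a, f a < ∫ ω, f ω ∂μ
  · obtain ⟨a, ha⟩ := hbelow
    exact hne ((integral_eq_iff_of_ae_le hf hconst
      (ae_of_all _ fun b => hgap a b ha)).mp hint)
  · simp only [not_exists, not_lt] at hbelow
    exact hne ((integral_eq_iff_of_ae_le hconst hf (ae_of_all _ hbelow)).mp hint.symm).symm

lemma integral_le_essSup_rnDeriv_mul_integral {P Q : Measure Ω}
    [P.HaveLebesgueDecomposition Q] [SigmaFinite P] (hPQ : P ≪ Q)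
    (hbdd : essSup (P.rnDeriv Q) Q ≠ ⊤) {g : Ω → ℝ} (hg : 0 ≤ᵐ[Q] g) (hgQ : Integrable g Q) :
    ∫ ω, g ω ∂P ≤ (essSup (P.rnDeriv Q) Q).toReal * ∫ ω, g ω ∂Q := by
  rw [← integral_toReal_rnDeriv_mul hPQ, ← integral_const_mul]
  refine integral_mono_of_nonneg ?_ (hgQ.const_mul _) ?_
  · filter_upwards [hg] with ω hω
    exact mul_nonneg ENNReal.toReal_nonneg hω
  · filter_upwards [hg, ae_le_essSup (f := P.rnDeriv Q) (μ := Q)] with ω hω hle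
    exact mul_le_mul_of_nonneg_right (ENNReal.toReal_mono hbdd hle) hω

lemma integral_affine_sub_comp {μ : Measure Ω} [IsProbabilityMeasure μ] {X : Ω → ℝ}
    {φ : ℝ → ℝ} (hX : Integrable X μ) (hφX : Integrable (fun ω => φ (X ω)) μ) (a c m : ℝ) :
    ∫ ω, (a + c * (X ω - m) - φ (X ω)) ∂μ = a + c * (∫ ω, X ω ∂μ - m) - ∫ ω, φ (X ω) ∂μ := by
  have hdev : Integrable (fun ω => c * (X ω - m)) μ := (hX.sub (integrable_const m)).const_mul c
  have hlin : Integrable (fun ω => a + c * (X ω - m)) μ := (integrable_const a).add hdev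
  rw [integral_sub hlin hφX, integral_add (integrable_const a) hdev,
    integral_const_mul, integral_sub hX (integrable_const m)]
  simp

lemma map_integral_sub_integral_comp_of_ae_eq_const {μ : Measure Ω} [IsProbabilityMeasure μ]
    {X : Ω → ℝ} {m : ℝ} (φ : ℝ → ℝ) (hX : X =ᵐ[μ] fun _ => m) :
    φ (∫ ω, X ω ∂μ) - ∫ ω, φ (X ω) ∂μ = 0 := by
  have hφX : (fun ω => φ (X ω)) =ᵐ[μ] fun _ => φ m := hX.fun_comp φ
  rw [integral_congr_ae hX, integral_congr_ae hφX]
  simp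

end MeasureTheory

theorem dragomir_jensen_concave {Ω : Type*} [MeasurableSpace Ω]
    (P Q : Measure Ω) [IsProbabilityMeasure P] [IsProbabilityMeasure Q]
    (hPQ : P ≪ Q) (hbdd : essSup (P.rnDeriv Q) Q ≠ ⊤)
    (X : Ω → ℝ) (hXP : Integrable X P) (hXQ : Integrable X Q)
    (s : Set ℝ) (φ : ℝ → ℝ) (hφ : ConcaveOn ℝ s φ)
    (hrange : ∀ ω, X ω ∈ s)
    (hφP : Integrable (fun ω => φ (X ω)) P)
    (hφQ : Integrable (fun ω => φ (X ω)) Q) :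
    φ (∫ ω, X ω ∂P) - ∫ ω, φ (X ω) ∂P ≤
      (essSup (P.rnDeriv Q) Q).toReal *
        (φ (∫ ω, X ω ∂Q) - ∫ ω, φ (X ω) ∂Q) := by
  set μ := ∫ ω, X ω ∂Q
  rcases ae_eq_integral_or_exists_lt_integral_lt hXQ with hconst | ⟨a, b, ha, hb⟩
  · rw [map_integral_sub_integral_comp_of_ae_eq_const φ (hPQ.ae_le hconst),
      map_integral_sub_integral_comp_of_ae_eq_const φ hconst, mul_zero]
  · have hconv := hφ.1.ordConnected
    obtain ⟨c, hc⟩ := hφ.exists_le_add_mul_sub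
      (hconv.mem_interior_of_lt_of_lt (hrange a) (hrange b) ha hb)
    have hg_nonneg : ∀ ω, 0 ≤ φ μ + c * (X ω - μ) - φ (X ω) := fun ω =>
      sub_nonneg.mpr (hc _ (hrange ω))
    have hg_int : Integrable (fun ω => φ μ + c * (X ω - μ) - φ (X ω)) Q :=
      ((integrable_const _).add ((hXQ.sub (integrable_const _)).const_mul c)).sub hφQ
    have hg_integral_Q := integral_affine_sub_comp hXQ hφQ (φ μ) c μ
    rw [sub_self, mul_zero, add_zero] at hg_integral_Q
    calc φ (∫ ω, X ω ∂P) - ∫ ω, φ (X ω) ∂P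
        ≤ φ μ + c * (∫ ω, X ω ∂P - μ) - ∫ ω, φ (X ω) ∂P := by
          gcongr
          exact hc _ (hconv.integral_mem hXP hrange)
      _ = ∫ ω, (φ μ + c * (X ω - μ) - φ (X ω)) ∂P := (integral_affine_sub_comp hXP hφP _ _ _).symm
      _ ≤ (essSup (P.rnDeriv Q) Q).toReal * ∫ ω, (φ μ + c * (X ω - μ) - φ (X ω)) ∂Q :=
          integral_le_essSup_rnDeriv_mul_integral hPQ hbdd (ae_of_all _ hg_nonneg) hg_int
      _ = (essSup (P.rnDeriv Q) Q).toReal * (φ μ - ∫ ω, φ (X ω) ∂Q) := by rw [hg_integral_Q]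
end

section
/- Let P and Q be probability measures on (Ω, 𝒜) with P ≪ Q, X : Ω → ℝ integrable with respect to both P and Q, and φ strictly convex on an interval containing the range of X with φ(X) integrable with respect to both P and Q and dP/dQ essentially bounded. Then ∫ φ(X) dP − φ(∫ X dP) = ‖dP/dQ‖_∞ · ( ∫ φ(X) dQ − φ(∫ X dQ) ) = 0 if and only if X is constant Q-almost everywhere. -/
/-!
If `X` is not a.e. constant, its mean `m` lies strictly between two values of `X`, hence in the
interior of the interval `s`. There the strictly convex `φ` has a right derivative `k`, and the
supporting line `φ m + k (x - m)` lies strictly below `φ` away from `m`. A vanishing Jensen gap under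
`Q` says that `φ ∘ X` and this line have the same `Q`-integral, so they agree `Q`-a.e., forcing
`X = m` `Q`-a.e. The factor `‖dP/dQ‖_∞` cannot kill the gap, since `P ≪ Q` makes it at least `1`.
-/

open MeasureTheory Set Filter

noncomputable def jensenGap {Ω : Type*} [MeasurableSpace Ω] (μ : Measure Ω) (φ : ℝ → ℝ)
    (X : Ω → ℝ) : ℝ :=
  ∫ ω, φ (X ω) ∂μ - φ (∫ ω, X ω ∂μ)

section

variable {Ω : Type*} [MeasurableSpace Ω] {μ : Measure Ω} [IsProbabilityMeasure μ] {X : Ω → ℝ}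
  {s : Set ℝ} {φ : ℝ → ℝ}

lemma jensenGap_eq_zero_of_ae_eq_const {c : ℝ} (hX : X =ᵐ[μ] fun _ => c) :
    jensenGap μ φ X = 0 := by
  have hφX : (fun ω => φ (X ω)) =ᵐ[μ] fun _ => φ c := hX.fun_comp φ
  rw [jensenGap, integral_congr_ae hX, integral_congr_ae hφX]
  simp

lemma StrictConvexOn.add_rightDeriv_mul_lt (hφ : StrictConvexOn ℝ s φ) {x y : ℝ}
    (hx : x ∈ interior s) (hy : y ∈ s) (hyx : y ≠ x) :
    φ x + derivWithin φ (Ioi x) x * (y - x) < φ y := by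
  rcases hyx.lt_or_gt with hyx | hxy
  · have hslope : slope φ y x < derivWithin φ (Ioi x) x :=
      (hφ.slope_lt_leftDeriv hy (interior_subset hx) hyx
        (hφ.convexOn.differentiableWithinAt_Iio_of_mem_interior hx)).trans_le
        (hφ.convexOn.leftDeriv_le_rightDeriv_of_mem_interior hx)
    rw [slope_def_field, div_lt_iff₀ (sub_pos.2 hyx)] at hslope
    linarith
  · have hslope : derivWithin φ (Ioi x) x < slope φ x y :=
      hφ.rightDeriv_lt_slope (interior_subset hx) hy hxy
        (hφ.convexOn.differentiableWithinAt_Ioi_of_mem_interior hx)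
    rw [slope_def_field, lt_div_iff₀ (sub_pos.2 hxy)] at hslope
    linarith

lemma integral_mem_interior_of_not_ae_eq (hs : s.OrdConnected) (hXs : ∀ᵐ ω ∂μ, X ω ∈ s)
    (hX : Integrable X μ) (hne : ¬X =ᵐ[μ] fun _ => ∫ ω, X ω ∂μ) :
    ∫ ω, X ω ∂μ ∈ interior s := by
  set m := ∫ ω, X ω ∂μ
  have hbelow : ∃ᵐ ω ∂μ, X ω < m := by
    by_contra h
    simp only [not_frequently, not_lt] at h
    exact hne ((integral_eq_iff_of_ae_le (integrable_const m) hX h).1 (by simp [m])).symm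
  have habove : ∃ᵐ ω ∂μ, m < X ω := by
    by_contra h
    simp only [not_frequently, not_lt] at h
    exact hne ((integral_eq_iff_of_ae_le hX (integrable_const m) h).1 (by simp [m]))
  obtain ⟨a, hXa, has⟩ := (hbelow.and_eventually hXs).exists
  obtain ⟨b, hXb, hbs⟩ := (habove.and_eventually hXs).exists
  exact mem_interior.2 ⟨Ioo (X a) (X b), Ioo_subset_Icc_self.trans (hs.out has hbs), isOpen_Ioo,
    hXa, hXb⟩

theorem StrictConvexOn.ae_eq_integral_of_jensenGap_eq_zero (hφ : StrictConvexOn ℝ s φ)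
    (hXs : ∀ᵐ ω ∂μ, X ω ∈ s) (hX : Integrable X μ) (hφX : Integrable (fun ω => φ (X ω)) μ)
    (hgap : jensenGap μ φ X = 0) :
    X =ᵐ[μ] fun _ => ∫ ω, X ω ∂μ := by
  set m := ∫ ω, X ω ∂μ
  by_contra hne
  have hm := integral_mem_interior_of_not_ae_eq hφ.1.ordConnected hXs hX hne
  set k := derivWithin φ (Ioi m) m
  have hlin : Integrable (fun ω => k * (X ω - m)) μ := (hX.sub (integrable_const m)).const_mul k
  have hL : Integrable (fun ω => φ m + k * (X ω - m)) μ := (integrable_const _).add hlin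
  have hL_integral : ∫ ω, φ m + k * (X ω - m) ∂μ = ∫ ω, φ (X ω) ∂μ := by
    rw [integral_add (integrable_const _) hlin,
      integral_const_mul, integral_sub hX (integrable_const m)]
    simp only [jensenGap, sub_eq_zero] at hgap
    simp [m, hgap]
  have hL_le : (fun ω => φ m + k * (X ω - m)) ≤ᵐ[μ] fun ω => φ (X ω) := by
    filter_upwards [hXs] with ω hω
    rcases eq_or_ne (X ω) m with h | h
    · simp [h]
    · exact (hφ.add_rightDeriv_mul_lt hm hω h).le
  have hL_eq := (integral_eq_iff_of_ae_le hL hφX hL_le).1 hL_integral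
  refine hne ?_
  filter_upwards [hXs, hL_eq] with ω hω hωL
  by_contra h
  exact (hφ.add_rightDeriv_mul_lt hm hω h).ne hωL

end

lemma one_le_essSup_rnDeriv {Ω : Type*} [MeasurableSpace Ω] {P Q : Measure Ω}
    [IsProbabilityMeasure P] [IsProbabilityMeasure Q] (hPQ : P ≪ Q) :
    1 ≤ essSup (P.rnDeriv Q) Q :=
  calc (1 : ENNReal) = ∫⁻ ω, P.rnDeriv Q ω ∂Q := by simp [Measure.lintegral_rnDeriv hPQ]
    _ ≤ ∫⁻ _, essSup (P.rnDeriv Q) Q ∂Q := lintegral_mono_ae ae_le_essSup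
    _ = essSup (P.rnDeriv Q) Q := by simp

theorem dragomir_jensen_zero_case_general {Ω : Type*} [MeasurableSpace Ω]
    (P Q : Measure Ω) [IsProbabilityMeasure P] [IsProbabilityMeasure Q]
    (hPQ : P ≪ Q) (hbdd : essSup (P.rnDeriv Q) Q ≠ ⊤)
    (X : Ω → ℝ) (hXQ : Integrable X Q)
    (s : Set ℝ) (φ : ℝ → ℝ) (hφ : StrictConvexOn ℝ s φ)
    (hrange : ∀ ω, X ω ∈ s)
    (hφQ : Integrable (fun ω => φ (X ω)) Q) :
    (∫ ω, φ (X ω) ∂P - φ (∫ ω, X ω ∂P) = 0 ∧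
      (essSup (P.rnDeriv Q) Q).toReal *
        (∫ ω, φ (X ω) ∂Q - φ (∫ ω, X ω ∂Q)) = 0) ↔
    ∃ c : ℝ, X =ᵐ[Q] fun _ => c := by
  change jensenGap P φ X = 0 ∧ (essSup (P.rnDeriv Q) Q).toReal * jensenGap Q φ X = 0 ↔ _
  constructor
  · rintro ⟨-, hgap⟩
    have hsup : (essSup (P.rnDeriv Q) Q).toReal ≠ 0 :=
      ENNReal.toReal_ne_zero.2 ⟨(one_pos.trans_le (one_le_essSup_rnDeriv hPQ)).ne', hbdd⟩
    exact ⟨_, hφ.ae_eq_integral_of_jensenGap_eq_zero (ae_of_all _ hrange) hXQ hφQ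
      ((mul_eq_zero.1 hgap).resolve_left hsup)⟩
  · rintro ⟨c, hc⟩
    simp [jensenGap_eq_zero_of_ae_eq_const hc, jensenGap_eq_zero_of_ae_eq_const (hPQ.ae_le hc)]

theorem dragomir_jensen_zero_case {Ω : Type*} [MeasurableSpace Ω]
    (P Q : Measure Ω) [IsProbabilityMeasure P] [IsProbabilityMeasure Q]
    (hPQ : P ≪ Q) (hbdd : essSup (P.rnDeriv Q) Q ≠ ⊤)
    (X : Ω → ℝ) (hXP : Integrable X P) (hXQ : Integrable X Q)
    (s : Set ℝ) (φ : ℝ → ℝ) (hφ : StrictConvexOn ℝ s φ)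
    (hrange : ∀ ω, X ω ∈ s)
    (hφP : Integrable (fun ω => φ (X ω)) P)
    (hφQ : Integrable (fun ω => φ (X ω)) Q) :
    (∫ ω, φ (X ω) ∂P - φ (∫ ω, X ω ∂P) = 0 ∧
      (essSup (P.rnDeriv Q) Q).toReal *
        (∫ ω, φ (X ω) ∂Q - φ (∫ ω, X ω ∂Q)) = 0) ↔
    ∃ c : ℝ, X =ᵐ[Q] fun _ => c :=
  dragomir_jensen_zero_case_general P Q hPQ hbdd X hXQ s φ hφ hrange hφQ
end
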